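/- Let U = λ₁ v₁⊗v₁ + v₂⊗v₂ + λ₃ v₃⊗v₃, where v₁, v₂, v₃ ∈ ℝ³ are orthonormal and 0 < λ₁ < 1 < λ₃. Let ê₁, ê₂ ∈ ℝ³ be orthonormal unit vectors such that (−I + 2 ê₁⊗ê₁) U (−I + 2 ê₁⊗ê₁) = (−I + 2 ê₂⊗ê₂) U (−I + 2 ê₂⊗ê₂) = Û and Û ≠ U. Define n_C¹ = ê₁, a_C¹ = ξ U ê₂ with ξ = 2 (ê₂ · U⁻²ê₁)/(ê₁ · U⁻²ê₁), and n_C² = ê₂, a_C² = η U ê₁ with η = −2 (ê₂ · U²ê₁)/(ê₁ · U²ê₁). Then, for each i ∈ {1, 2}, the cofactor conditions hold for (U, a_Cⁱ, n_Cⁱ) if and only if: ê₁ · v₂ = 0, ê₂ · v₂ = 0, ê₁ is parallel to neither v₁ nor v₃, and the inequality (CC3) tr(U²) − det(U²) − |a_Cⁱ|²|n_Cⁱ|²/4 − 2 ≥ 0 holds. -/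

import Mathlib

open Matrix Polynomial

/-- The 180° rotation matrix `-I + 2 ê⊗ê` for a unit vector `ê`. -/
noncomputable def reflMat (e : Fin 3 → ℝ) : Matrix (Fin 3) (Fin 3) ℝ :=
  -1 + (2 : ℝ) • Matrix.vecMulVec e e

/-- Membership in SO(3): orthogonal with determinant 1. -/
def SO3 (R : Matrix (Fin 3) (Fin 3) ℝ) : Prop := R * Rᵀ = 1 ∧ R.det = 1

/-- The cofactor matrix: `(cof M)ᵢⱼ = (−1)^{i+j} det(M with row i and column j deleted)`. -/
noncomputable def cof (M : Matrix (Fin 3) (Fin 3) ℝ) : Matrix (Fin 3) (Fin 3) ℝ :=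
  Matrix.of fun i j => (-1 : ℝ) ^ ((i : ℕ) + (j : ℕ)) *
    (M.submatrix i.succAbove j.succAbove).det

/-- `μ` is the middle eigenvalue of `U`: its eigenvalues, with multiplicity,
are `l1 ≤ μ ≤ l3`. -/
def IsMiddleEigenvalue (U : Matrix (Fin 3) (Fin 3) ℝ) (μ : ℝ) : Prop :=
  ∃ l1 l3 : ℝ, l1 ≤ μ ∧ μ ≤ l3 ∧
    U.charpoly = (X - C l1) * (X - C μ) * (X - C l3)

/-- (CC1): the middle eigenvalue of `U` is 1. -/
def CC1 (U : Matrix (Fin 3) (Fin 3) ℝ) : Prop := IsMiddleEigenvalue U 1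

/-- (CC2): `a · U cof(U² − I) n = 0`. -/
noncomputable def CC2 (U : Matrix (Fin 3) (Fin 3) ℝ) (a n : Fin 3 → ℝ) : Prop :=
  a ⬝ᵥ (U * cof (U * U - 1)).mulVec n = 0

/-- (CC3): `tr U² − det U² − |a|²|n|²/4 − 2 ≥ 0`. -/
def CC3 (U : Matrix (Fin 3) (Fin 3) ℝ) (a n : Fin 3 → ℝ) : Prop :=
  (U * U).trace - (U * U).det - (a ⬝ᵥ a) * (n ⬝ᵥ n) / 4 - 2 ≥ 0

/-!
Write `U = Qᵀ diag(λ₁, 1, λ₃) Q`, where `Q` is the orthogonal matrix with rows `vᵢ`, so that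
`(Q x)ᵢ = vᵢ · x`. Then `U cof(U² − I) = (λ₁² − 1)(λ₃² − 1) v₂ ⊗ v₂`, so (CC2) for `(a, n)` says
`(a · v₂)(v₂ · n) = 0`, while (CC1) always holds.

Since `R₁R₂ = I − 2P` for the rotations `Rᵢ = −I + 2 êᵢ ⊗ êᵢ` and the projection `P` onto
`span(ê₁, ê₂)`, the hypothesis `R₁UR₁ = R₂UR₂` says that `U` commutes with `P`. As the
eigenvalues of `U` are simple, the three vectors `(ê₁ · vₖ, ê₂ · vₖ) ∈ ℝ²` are then pairwise
orthogonal, so one of them vanishes. If it is the one for `k = 2`, then `ê₁ · v₂ = ê₂ · v₂ = 0`.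
Otherwise `v₂` and one other eigenvector `w` (eigenvalue `λ ≠ 1`) span the plane of `ê₁, ê₂`;
neither `ê₁` nor `ê₂` is an eigenvector (that would give `Û = U`), so `ê₁ · v₂ ≠ 0 ≠ ê₂ · v₂`,
and `ê₂ · f(U) ê₁ = (f(1) − f(λ)) (ê₁ · v₂)(ê₂ · v₂) ≠ 0` for `f(x) = x^{±2}`. Hence `ξ, η ≠ 0`
and (CC2) fails for both pairs, as does the right-hand side.
-/

section Reflection

variable {U : Matrix (Fin 3) (Fin 3) ℝ} {e f : Fin 3 → ℝ}

lemma reflMat_mul_self (he : e ⬝ᵥ e = 1) : reflMat e * reflMat e = 1 := by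
  simp only [reflMat, add_mul, mul_add, smul_mul_assoc, mul_smul_comm, vecMulVec_mul_vecMulVec,
    he, one_smul, neg_mul, mul_neg, one_mul, mul_one]
  module

lemma reflMat_mul_reflMat (hef : e ⬝ᵥ f = 0) :
    reflMat e * reflMat f = 1 - (2 : ℝ) • (vecMulVec e e + vecMulVec f f) := by
  simp only [reflMat, add_mul, mul_add, smul_mul_assoc, mul_smul_comm, vecMulVec_mul_vecMulVec,
    hef, zero_smul, vecMulVec_zero, smul_zero, add_zero, neg_mul, mul_neg, one_mul, mul_one]
  module

lemma reflMat_conj_eq_self (hU : Uᵀ = U) (he : e ⬝ᵥ e = 1) {μ : ℝ} (hUe : U *ᵥ e = μ • e) :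
    reflMat e * U * reflMat e = U := by
  have hcomm : reflMat e * U = U * reflMat e := by
    simp only [reflMat, add_mul, mul_add, smul_mul_assoc, mul_smul_comm, neg_mul, mul_neg, one_mul,
      mul_one, mul_vecMulVec, vecMulVec_mul, ← mulVec_transpose, hU, hUe, smul_vecMulVec,
      vecMulVec_smul]
  rw [hcomm, mul_assoc, reflMat_mul_self he, mul_one]

lemma commute_of_reflMat_conj_eq (he : e ⬝ᵥ e = 1) (hf : f ⬝ᵥ f = 1) (hef : e ⬝ᵥ f = 0)
    (h : reflMat e * U * reflMat e = reflMat f * U * reflMat f) :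
    Commute U (vecMulVec e e + vecMulVec f f) := by
  have hR : Commute U (reflMat e * reflMat f) := by
    calc U * (reflMat e * reflMat f)
        = reflMat e * (reflMat e * U * reflMat e) * reflMat f := by
          simp only [← mul_assoc, reflMat_mul_self he, one_mul]
      _ = reflMat e * reflMat f * U := by
          rw [h]; simp only [mul_assoc, reflMat_mul_self hf, mul_one]
  rw [reflMat_mul_reflMat hef] at hR
  have := ((Commute.one_right U).sub_right hR).smul_right (2⁻¹ : ℝ)
  rwa [sub_sub_cancel, smul_smul, inv_mul_cancel₀ two_ne_zero, one_smul] at this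

end Reflection

section OrthogonalConj

variable {n : Type*} [Fintype n] [DecidableEq n] {Q : Matrix n n ℝ}

lemma conj_mul_conj (hQ : Q * Qᵀ = 1) (A B : Matrix n n ℝ) :
    Qᵀ * A * Q * (Qᵀ * B * Q) = Qᵀ * (A * B) * Q := by
  simp only [mul_assoc, ← mul_assoc Q Qᵀ, hQ, one_mul]

lemma charpoly_conj (hQ : Q * Qᵀ = 1) (A : Matrix n n ℝ) :
    (Qᵀ * A * Q).charpoly = A.charpoly := by
  rw [charpoly_mul_comm, ← mul_assoc, hQ, one_mul]

lemma adjugate_conj (hQ : Q * Qᵀ = 1) (A : Matrix n n ℝ) :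
    adjugate (Qᵀ * A * Q) = Qᵀ * adjugate A * Q := by
  have hdet : Q.det * Q.det = 1 := by
    simpa only [det_mul, det_transpose, det_one] using congrArg det hQ
  have hadj : adjugate Q = Q.det • Qᵀ := by
    calc adjugate Q = Qᵀ * (Q * adjugate Q) := by
          rw [← mul_assoc, mul_eq_one_comm.mp hQ, one_mul]
      _ = Q.det • Qᵀ := by rw [mul_adjugate, mul_smul_comm, mul_one]
  rw [adjugate_mul_distrib, adjugate_mul_distrib, ← adjugate_transpose, hadj, transpose_smul,
    transpose_transpose]
  simp only [smul_mul_assoc, mul_smul_comm, smul_smul, hdet, one_smul, mul_assoc]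

lemma transpose_conj_diagonal (d : n → ℝ) :
    (Qᵀ * diagonal d * Q)ᵀ = Qᵀ * diagonal d * Q := by
  rw [transpose_mul, transpose_mul, transpose_transpose, diagonal_transpose, mul_assoc]

lemma dotProduct_conj_diagonal_mulVec (d x y : n → ℝ) :
    x ⬝ᵥ (Qᵀ * diagonal d * Q) *ᵥ y = ∑ i, d i * ((Q *ᵥ x) i * (Q *ᵥ y) i) := by
  rw [← mulVec_mulVec, ← mulVec_mulVec, dotProduct_mulVec, vecMul_transpose]
  simp only [dotProduct, mulVec_diagonal]
  exact Finset.sum_congr rfl fun i _ => by ring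

lemma dotProduct_mulVec_mulVec_of_orthogonal (hQ : Q * Qᵀ = 1) (x y : n → ℝ) :
    (Q *ᵥ x) ⬝ᵥ (Q *ᵥ y) = x ⬝ᵥ y := by
  rw [dotProduct_mulVec, ← mulVec_transpose, mulVec_mulVec, mul_eq_one_comm.mp hQ, one_mulVec]

lemma conj_diagonal_mulVec_eq_smul (hQ : Q * Qᵀ = 1) {d x : n → ℝ} {μ : ℝ}
    (h : ∀ i, d i * (Q *ᵥ x) i = μ * (Q *ᵥ x) i) :
    (Qᵀ * diagonal d * Q) *ᵥ x = μ • x := by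
  have hD : diagonal d *ᵥ (Q *ᵥ x) = μ • (Q *ᵥ x) :=
    funext fun i => by simp [mulVec_diagonal, h]
  rw [← mulVec_mulVec, ← mulVec_mulVec, hD, mulVec_smul, mulVec_mulVec, mul_eq_one_comm.mp hQ,
    one_mulVec]

lemma conj_diagonal_mulVec_row (hQ : Q * Qᵀ = 1) (d : n → ℝ) (k : n) :
    (Qᵀ * diagonal d * Q) *ᵥ Q k = d k • Q k := by
  refine conj_diagonal_mulVec_eq_smul hQ fun i => ?_
  have hQk : (Q *ᵥ Q k) i = if i = k then 1 else 0 := by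
    rw [← one_apply, ← hQ, mul_apply]; rfl
  by_cases hik : i = k <;> simp [hQk, hik]

lemma inv_conj_diagonal (hQ : Q * Qᵀ = 1) {d : n → ℝ} (hd : ∀ i, d i ≠ 0) :
    (Qᵀ * diagonal d * Q)⁻¹ = Qᵀ * diagonal d⁻¹ * Q := by
  refine inv_eq_left_inv ?_
  rw [conj_mul_conj hQ, diagonal_mul_diagonal]
  simp only [Pi.inv_apply, inv_mul_cancel₀ (hd _), diagonal_one, mul_one, mul_eq_one_comm.mp hQ]

lemma pos_of_conj_diagonal (hQ : Q * Qᵀ = 1) {t x : n → ℝ} (ht : ∀ i, 0 < t i)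
    (hx : x ≠ 0) :
    0 < x ⬝ᵥ (Qᵀ * diagonal t * Q) *ᵥ x := by
  have hQx : Q *ᵥ x ≠ 0 := fun h0 => hx <| by
    rw [← one_mulVec x, ← mul_eq_one_comm.mp hQ, ← mulVec_mulVec, h0, mulVec_zero]
  obtain ⟨i, hi⟩ := Function.ne_iff.mp hQx
  rw [dotProduct_conj_diagonal_mulVec]
  exact Finset.sum_pos' (fun j _ => mul_nonneg (ht j).le (mul_self_nonneg _))
    ⟨i, Finset.mem_univ _, mul_pos (ht i) (mul_self_pos.mpr hi)⟩

lemma commute_diagonal_of_commute_conj (hQ : Q * Qᵀ = 1) {d : n → ℝ} {P : Matrix n n ℝ}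
    (h : Commute (Qᵀ * diagonal d * Q) P) : Commute (diagonal d) (Q * P * Qᵀ) := by
  have := congrArg (fun M => Q * M * Qᵀ) h.eq
  simp only [mul_assoc, ← mul_assoc Q Qᵀ, hQ, one_mul] at this
  simp only [Commute, SemiconjBy, ← mul_assoc] at this ⊢
  simpa only [mul_assoc, hQ, mul_one] using this

lemma apply_eq_zero_of_commute_diagonal {d : n → ℝ} {M : Matrix n n ℝ}
    (h : Commute (diagonal d) M) {i j : n} (hij : d i ≠ d j) : M i j = 0 := by
  have := congrFun₂ h.eq i j
  rw [diagonal_mul, mul_diagonal] at this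
  exact (mul_eq_zero.mp (by linear_combination this : (d i - d j) * M i j = 0)).resolve_left
    (sub_ne_zero.mpr hij)

lemma mulVec_conj_diagonal_mulVec (hQ : Q * Qᵀ = 1) (d x : n → ℝ) (i : n) :
    (Q *ᵥ ((Qᵀ * diagonal d * Q) *ᵥ x)) i = d i * (Q *ᵥ x) i := by
  rw [mulVec_mulVec, ← mul_assoc, ← mul_assoc, hQ, one_mul, ← mulVec_mulVec, mulVec_diagonal]

end OrthogonalConj

lemma exists_eq_zero_of_pairwise_orthogonal {x y : Fin 3 → ℝ}
    (h : ∀ i j, i ≠ j → x i * x j + y i * y j = 0) : ∃ k, x k = 0 ∧ y k = 0 := by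
  have h01 := h 0 1 (by decide)
  have h02 := h 0 2 (by decide)
  have h12 := h 1 2 (by decide)
  by_cases hδ : x 0 * y 1 - x 1 * y 0 = 0
  · -- Lagrange's identity for `uₖ = (x k, y k)`: `|u₀|²|u₁|² = (u₀ · u₁)² + det(u₀, u₁)²`.
    have hprod : (x 0 ^ 2 + y 0 ^ 2) * (x 1 ^ 2 + y 1 ^ 2) = 0 := by
      linear_combination (x 0 * x 1 + y 0 * y 1) * h01 + (x 0 * y 1 - x 1 * y 0) * hδ
    rcases mul_eq_zero.mp hprod with h0 | h1
    · exact ⟨0, by nlinarith [sq_nonneg (x 0), sq_nonneg (y 0)],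
        by nlinarith [sq_nonneg (x 0), sq_nonneg (y 0)]⟩
    · exact ⟨1, by nlinarith [sq_nonneg (x 1), sq_nonneg (y 1)],
        by nlinarith [sq_nonneg (x 1), sq_nonneg (y 1)]⟩
  · -- `u₀, u₁` span `ℝ²` and `u₂` is orthogonal to both.
    refine ⟨2, (mul_eq_zero.mp ?_).resolve_left hδ, (mul_eq_zero.mp ?_).resolve_left hδ⟩
    · linear_combination y 1 * h02 - y 0 * h12
    · linear_combination x 0 * h12 - x 1 * h02

lemma middle_coord_dichotomy {a b : Fin 3 → ℝ} (hab : a ⬝ᵥ b = 0)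
    (hpair : ∀ i j, i ≠ j → a i * a j + b i * b j = 0)
    (ha : ∀ j, ∃ i ≠ j, a i ≠ 0) (hb : ∀ j, ∃ i ≠ j, b i ≠ 0) :
    (a 1 = 0 ∧ b 1 = 0) ∨ (a 1 ≠ 0 ∧ b 1 ≠ 0 ∧
      ∀ t : Fin 3 → ℝ, t 0 ≠ t 1 → t 2 ≠ t 1 → ∑ i, t i * (b i * a i) ≠ 0) := by
  obtain ⟨k, hak, hbk⟩ := exists_eq_zero_of_pairwise_orthogonal hpair
  by_cases hk1 : k = 1
  · exact Or.inl (hk1 ▸ ⟨hak, hbk⟩)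
  have hmid : ∀ c : Fin 3 → ℝ, c k = 0 → (∀ j, ∃ i ≠ j, c i ≠ 0) → c 1 ≠ 0 := by
    intro c hck hc hc1
    obtain ⟨i, hi0, hci⟩ := hc 0
    obtain ⟨i', hi'2, hci'⟩ := hc 2
    fin_cases k <;> fin_cases i <;> fin_cases i' <;> simp_all
  have hα := hmid a hak ha
  have hβ := hmid b hbk hb
  refine Or.inr ⟨hα, hβ, fun t ht0 ht2 => ?_⟩
  simp only [dotProduct, Fin.sum_univ_three] at hab ⊢
  obtain rfl | rfl : k = 0 ∨ k = 2 := by fin_cases k <;> simp_all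
  · rw [show t 0 * (b 0 * a 0) + t 1 * (b 1 * a 1) + t 2 * (b 2 * a 2)
        = (t 1 - t 2) * (a 1 * b 1) by
          linear_combination t 2 * hab + (t 0 - t 2) * b 0 * hak]
    exact mul_ne_zero (sub_ne_zero.mpr ht2.symm) (mul_ne_zero hα hβ)
  · rw [show t 0 * (b 0 * a 0) + t 1 * (b 1 * a 1) + t 2 * (b 2 * a 2)
        = (t 1 - t 0) * (a 1 * b 1) by
          linear_combination t 0 * hab + (t 2 - t 0) * b 2 * hak]
    exact mul_ne_zero (sub_ne_zero.mpr ht0.symm) (mul_ne_zero hα hβ)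

lemma cof_eq_transpose_adjugate (M : Matrix (Fin 3) (Fin 3) ℝ) : cof M = (adjugate M)ᵀ := by
  rw [adjugate_fin_three]
  ext i j
  fin_cases i <;> fin_cases j <;>
    simp [cof, det_fin_two, Fin.succAbove, Fin.lt_def, -Fin.val_pos_iff] <;> ring

section Fin3

variable {Q : Matrix (Fin 3) (Fin 3) ℝ}

lemma cc1_conj_diagonal (hQ : Q * Qᵀ = 1) {d : Fin 3 → ℝ} (h0 : d 0 ≤ 1) (h1 : d 1 = 1)
    (h2 : 1 ≤ d 2) : CC1 (Qᵀ * diagonal d * Q) :=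
  ⟨d 0, d 2, h0, h2, by rw [charpoly_conj hQ, charpoly_diagonal, Fin.prod_univ_three, h1]⟩

lemma mul_cof_sq_sub_one_conj_diagonal (hQ : Q * Qᵀ = 1) (d : Fin 3 → ℝ) :
    Qᵀ * diagonal d * Q * cof (Qᵀ * diagonal d * Q * (Qᵀ * diagonal d * Q) - 1)
      = Qᵀ * diagonal (fun i => d i * ∏ j ∈ Finset.univ.erase i, (d j * d j - 1)) * Q := by
  have hsq : Qᵀ * diagonal d * Q * (Qᵀ * diagonal d * Q) - 1
      = Qᵀ * diagonal (fun i => d i * d i - 1) * Q := by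
    have hdiag : diagonal (fun i => d i * d i - 1) = diagonal (fun i => d i * d i) - 1 := by
      rw [← diagonal_one, diagonal_sub]
    rw [conj_mul_conj hQ, diagonal_mul_diagonal, hdiag, mul_sub, sub_mul, mul_one,
      mul_eq_one_comm.mp hQ]
  rw [cof_eq_transpose_adjugate, hsq, adjugate_transpose, transpose_conj_diagonal,
    adjugate_conj hQ, adjugate_diagonal, conj_mul_conj hQ, diagonal_mul_diagonal]

lemma cc2_conj_diagonal_iff (hQ : Q * Qᵀ = 1) {d : Fin 3 → ℝ} (hd1 : d 1 = 1)
    (a n : Fin 3 → ℝ) :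
    CC2 (Qᵀ * diagonal d * Q) a n ↔
      (d 0 * d 0 - 1) * (d 2 * d 2 - 1) * ((Q *ᵥ a) 1 * (Q *ᵥ n) 1) = 0 := by
  rw [CC2, mul_cof_sq_sub_one_conj_diagonal hQ, dotProduct_conj_diagonal_mulVec, Fin.sum_univ_three,
    show Finset.univ.erase (0 : Fin 3) = {1, 2} by decide,
    show Finset.univ.erase (1 : Fin 3) = {0, 2} by decide,
    show Finset.univ.erase (2 : Fin 3) = {0, 1} by decide]
  simp [hd1]

lemma ne_smul_row (hQ : Q * Qᵀ = 1) (d : Fin 3 → ℝ) {x : Fin 3 → ℝ} (hx : x ⬝ᵥ x = 1)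
    (hne : reflMat x * (Qᵀ * diagonal d * Q) * reflMat x ≠ Qᵀ * diagonal d * Q) (k : Fin 3)
    (c : ℝ) : x ≠ c • Q k := by
  rintro rfl
  refine hne (reflMat_conj_eq_self (transpose_conj_diagonal d) hx (μ := d k) ?_)
  rw [mulVec_smul, conj_diagonal_mulVec_row hQ, smul_comm]

lemma cc2_smul_conj_diagonal_mulVec_iff (hQ : Q * Qᵀ = 1) {d : Fin 3 → ℝ} (hd1 : d 1 = 1)
    (hd : (d 0 * d 0 - 1) * (d 2 * d 2 - 1) ≠ 0) (c : ℝ) (x y : Fin 3 → ℝ) :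
    CC2 (Qᵀ * diagonal d * Q) (c • (Qᵀ * diagonal d * Q) *ᵥ x) y ↔
      c * ((Q *ᵥ x) 1 * (Q *ᵥ y) 1) = 0 := by
  rw [cc2_conj_diagonal_iff hQ hd1, mulVec_smul, Pi.smul_apply, mulVec_conj_diagonal_mulVec hQ,
    hd1, smul_eq_mul, one_mul, mul_eq_zero, or_iff_right hd, mul_assoc]

lemma exists_ne_coord_ne_zero (hQ : Q * Qᵀ = 1) (d : Fin 3 → ℝ) {x : Fin 3 → ℝ}
    (hx : x ⬝ᵥ x = 1)
    (hne : reflMat x * (Qᵀ * diagonal d * Q) * reflMat x ≠ Qᵀ * diagonal d * Q) (j : Fin 3) :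
    ∃ i ≠ j, (Q *ᵥ x) i ≠ 0 := by
  by_contra! h
  refine hne (reflMat_conj_eq_self (transpose_conj_diagonal d) hx
    (conj_diagonal_mulVec_eq_smul hQ (μ := d j) fun i => ?_))
  by_cases hij : i = j
  · rw [hij]
  · rw [h i hij, mul_zero, mul_zero]

lemma reflection_middle_dichotomy (hQ : Q * Qᵀ = 1) {d : Fin 3 → ℝ}
    (hd : Function.Injective d) {e f : Fin 3 → ℝ} (he : e ⬝ᵥ e = 1) (hf : f ⬝ᵥ f = 1)
    (hef : e ⬝ᵥ f = 0)
    (hR : reflMat e * (Qᵀ * diagonal d * Q) * reflMat e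
      = reflMat f * (Qᵀ * diagonal d * Q) * reflMat f)
    (hne : reflMat e * (Qᵀ * diagonal d * Q) * reflMat e ≠ Qᵀ * diagonal d * Q) :
    ((Q *ᵥ e) 1 = 0 ∧ (Q *ᵥ f) 1 = 0) ∨ ((Q *ᵥ e) 1 ≠ 0 ∧ (Q *ᵥ f) 1 ≠ 0 ∧
      ∀ t : Fin 3 → ℝ, t 0 ≠ t 1 → t 2 ≠ t 1 → f ⬝ᵥ (Qᵀ * diagonal t * Q) *ᵥ e ≠ 0) := by
  have hcomm := commute_diagonal_of_commute_conj hQ (commute_of_reflMat_conj_eq he hf hef hR)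
  have hP : Q * (vecMulVec e e + vecMulVec f f) * Qᵀ
      = vecMulVec (Q *ᵥ e) (Q *ᵥ e) + vecMulVec (Q *ᵥ f) (Q *ᵥ f) := by
    simp only [mul_add, add_mul, mul_vecMulVec, vecMulVec_mul, vecMul_transpose]
  rw [hP] at hcomm
  have hpair : ∀ i j, i ≠ j → (Q *ᵥ e) i * (Q *ᵥ e) j + (Q *ᵥ f) i * (Q *ᵥ f) j = 0 :=
    fun i j hij => by
      simpa only [Matrix.add_apply, vecMulVec_apply] using
        apply_eq_zero_of_commute_diagonal hcomm (hd.ne hij)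
  simp only [dotProduct_conj_diagonal_mulVec]
  exact middle_coord_dichotomy (by rw [dotProduct_mulVec_mulVec_of_orthogonal hQ, hef]) hpair
    (exists_ne_coord_ne_zero hQ d he hne) (exists_ne_coord_ne_zero hQ d hf (hR ▸ hne))

lemma quotients_ne_zero_of_middle_coord (hQ : Q * Qᵀ = 1) {d : Fin 3 → ℝ}
    (hd : Function.Injective d) (hd_pos : ∀ i, 0 < d i) {e f : Fin 3 → ℝ} (he : e ≠ 0)
    (hfe : ∀ t : Fin 3 → ℝ, t 0 ≠ t 1 → t 2 ≠ t 1 → f ⬝ᵥ (Qᵀ * diagonal t * Q) *ᵥ e ≠ 0) :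
    f ⬝ᵥ ((Qᵀ * diagonal d * Q)⁻¹ * (Qᵀ * diagonal d * Q)⁻¹) *ᵥ e
        / e ⬝ᵥ ((Qᵀ * diagonal d * Q)⁻¹ * (Qᵀ * diagonal d * Q)⁻¹) *ᵥ e ≠ 0 ∧
      f ⬝ᵥ (Qᵀ * diagonal d * Q * (Qᵀ * diagonal d * Q)) *ᵥ e
        / e ⬝ᵥ (Qᵀ * diagonal d * Q * (Qᵀ * diagonal d * Q)) *ᵥ e ≠ 0 := by
  have hsq : ∀ i j, d i * d i = d j * d j → i = j :=
    fun i j h => hd ((mul_self_inj (hd_pos i).le (hd_pos j).le).mp h)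
  have hsq_inv : ∀ i j, (d i)⁻¹ * (d i)⁻¹ = (d j)⁻¹ * (d j)⁻¹ → i = j :=
    fun i j h => hsq i j (by simpa only [← mul_inv, _root_.inv_inj] using h)
  rw [inv_conj_diagonal hQ fun i => (hd_pos i).ne', conj_mul_conj hQ, conj_mul_conj hQ,
    diagonal_mul_diagonal, diagonal_mul_diagonal]
  constructor
  · refine div_ne_zero (hfe _ ?_ ?_) (pos_of_conj_diagonal hQ (fun i => ?_) he).ne'
    · exact fun h => absurd (hsq_inv 0 1 h) (by decide)
    · exact fun h => absurd (hsq_inv 2 1 h) (by decide)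
    · have := hd_pos i; simp only [Pi.inv_apply]; positivity
  · refine div_ne_zero (hfe _ ?_ ?_) (pos_of_conj_diagonal hQ (fun i => ?_) he).ne'
    · exact fun h => absurd (hsq 0 1 h) (by decide)
    · exact fun h => absurd (hsq 2 1 h) (by decide)
    · have := hd_pos i; positivity

end Fin3

lemma rows_mul_transpose_eq_one {v₁ v₂ v₃ : Fin 3 → ℝ}
    (h₁ : v₁ ⬝ᵥ v₁ = 1) (h₂ : v₂ ⬝ᵥ v₂ = 1) (h₃ : v₃ ⬝ᵥ v₃ = 1)
    (h₁₂ : v₁ ⬝ᵥ v₂ = 0) (h₁₃ : v₁ ⬝ᵥ v₃ = 0) (h₂₃ : v₂ ⬝ᵥ v₃ = 0) :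
    of ![v₁, v₂, v₃] * (of ![v₁, v₂, v₃])ᵀ = 1 := by
  ext i j
  change ![v₁, v₂, v₃] i ⬝ᵥ ![v₁, v₂, v₃] j = (1 : Matrix (Fin 3) (Fin 3) ℝ) i j
  fin_cases i <;> fin_cases j <;>
    simp [h₁, h₂, h₃, h₁₂, h₁₃, h₂₃, dotProduct_comm v₂ v₁, dotProduct_comm v₃ v₁,
      dotProduct_comm v₃ v₂]

lemma rows_transpose_mul_diagonal_mul (v₁ v₂ v₃ : Fin 3 → ℝ) (a b c : ℝ) :
    (of ![v₁, v₂, v₃])ᵀ * diagonal ![a, b, c] * of ![v₁, v₂, v₃]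
      = a • vecMulVec v₁ v₁ + b • vecMulVec v₂ v₂ + c • vecMulVec v₃ v₃ := by
  ext i j
  simp only [mul_apply, transpose_apply, of_apply, diagonal_apply, mul_ite, mul_zero,
    Finset.sum_ite_eq', Finset.mem_univ, ↓reduceIte, Fin.sum_univ_three, cons_val_zero,
    cons_val_one, cons_val, Matrix.add_apply, Matrix.smul_apply, vecMulVec_apply, smul_eq_mul]
  ring

theorem stmt_10 (U : Matrix (Fin 3) (Fin 3) ℝ) (v1 v2 v3 e1 e2 : Fin 3 → ℝ)
    (l1 l3 : ℝ)
    (hl1 : 0 < l1) (hl1' : l1 < 1) (hl3 : 1 < l3)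
    (hv1 : v1 ⬝ᵥ v1 = 1) (hv2 : v2 ⬝ᵥ v2 = 1) (hv3 : v3 ⬝ᵥ v3 = 1)
    (hv12 : v1 ⬝ᵥ v2 = 0) (hv13 : v1 ⬝ᵥ v3 = 0) (hv23 : v2 ⬝ᵥ v3 = 0)
    (hU : U = l1 • Matrix.vecMulVec v1 v1 + Matrix.vecMulVec v2 v2
        + l3 • Matrix.vecMulVec v3 v3)
    (he1 : e1 ⬝ᵥ e1 = 1) (he2 : e2 ⬝ᵥ e2 = 1) (he12 : e1 ⬝ᵥ e2 = 0)
    (Uhat : Matrix (Fin 3) (Fin 3) ℝ)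
    (hUhat1 : Uhat = reflMat e1 * U * reflMat e1)
    (hUhat2 : Uhat = reflMat e2 * U * reflMat e2)
    (hne : Uhat ≠ U)
    (ξ η : ℝ)
    (hξ : ξ = 2 * (e2 ⬝ᵥ (U⁻¹ * U⁻¹).mulVec e1) / (e1 ⬝ᵥ (U⁻¹ * U⁻¹).mulVec e1))
    (hη : η = -2 * (e2 ⬝ᵥ (U * U).mulVec e1) / (e1 ⬝ᵥ (U * U).mulVec e1))
    (nC1 aC1 nC2 aC2 : Fin 3 → ℝ)
    (hn1 : nC1 = e1) (ha1 : aC1 = ξ • U.mulVec e2)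
    (hn2 : nC2 = e2) (ha2 : aC2 = η • U.mulVec e1) :
    ((CC1 U ∧ CC2 U aC1 nC1 ∧ CC3 U aC1 nC1) ↔
      (e1 ⬝ᵥ v2 = 0 ∧ e2 ⬝ᵥ v2 = 0 ∧
        (¬ ∃ c : ℝ, e1 = c • v1) ∧ (¬ ∃ c : ℝ, e1 = c • v3) ∧
        CC3 U aC1 nC1)) ∧
    ((CC1 U ∧ CC2 U aC2 nC2 ∧ CC3 U aC2 nC2) ↔
      (e1 ⬝ᵥ v2 = 0 ∧ e2 ⬝ᵥ v2 = 0 ∧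
        (¬ ∃ c : ℝ, e1 = c • v1) ∧ (¬ ∃ c : ℝ, e1 = c • v3) ∧
        CC3 U aC2 nC2)) := by
  set Q : Matrix (Fin 3) (Fin 3) ℝ := of ![v1, v2, v3]
  set d : Fin 3 → ℝ := ![l1, 1, l3]
  have hQ : Q * Qᵀ = 1 := rows_mul_transpose_eq_one hv1 hv2 hv3 hv12 hv13 hv23
  have hUQ : U = Qᵀ * diagonal d * Q := by rw [hU, rows_transpose_mul_diagonal_mul, one_smul]
  have hd1 : d 1 = 1 := rfl
  have hd_pos : ∀ i, 0 < d i := by intro i; fin_cases i <;> simp [d] <;> linarith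
  have hd : Function.Injective d := by
    intro i j h; fin_cases i <;> fin_cases j <;> simp [d] at h ⊢ <;> linarith
  have hκ : (d 0 * d 0 - 1) * (d 2 * d 2 - 1) ≠ 0 :=
    mul_ne_zero (by show l1 * l1 - 1 ≠ 0; nlinarith) (by show l3 * l3 - 1 ≠ 0; nlinarith)
  have hCC1 : CC1 U := hUQ ▸ cc1_conj_diagonal hQ (d := d) hl1'.le hd1 hl3.le
  have hα : e1 ⬝ᵥ v2 = (Q *ᵥ e1) 1 := dotProduct_comm _ _
  have hβ : e2 ⬝ᵥ v2 = (Q *ᵥ e2) 1 := dotProduct_comm _ _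
  have hR : reflMat e1 * U * reflMat e1 = reflMat e2 * U * reflMat e2 := hUhat1 ▸ hUhat2
  have hne1 : reflMat e1 * U * reflMat e1 ≠ U := hUhat1 ▸ hne
  have hnp1 : ¬ ∃ c : ℝ, e1 = c • v1 := fun ⟨c, hc⟩ => ne_smul_row hQ d he1 (hUQ ▸ hne1) 0 c hc
  have hnp3 : ¬ ∃ c : ℝ, e1 = c • v3 := fun ⟨c, hc⟩ => ne_smul_row hQ d he1 (hUQ ▸ hne1) 2 c hc
  clear_value Q d
  subst hUQ
  rw [ha1, hn1, ha2, hn2, cc2_smul_conj_diagonal_mulVec_iff hQ hd1 hκ,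
    cc2_smul_conj_diagonal_mulVec_iff hQ hd1 hκ, hα, hβ]
  rcases reflection_middle_dichotomy hQ hd he1 he2 he12 hR hne1 with ⟨ha, hb⟩ | ⟨ha, hb, hfe⟩
  · simp [ha, hb, hnp1, hnp3, hCC1]
  obtain ⟨hξ0, hη0⟩ :=
    quotients_ne_zero_of_middle_coord hQ hd hd_pos (fun h => by simp [h] at he1) hfe
  rw [mul_div_assoc] at hξ hη
  simp [ha, hb, hξ, hη, hξ0, hη0]
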